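/- arXiv:1102.4291 — 3 statements merged into one kernel-verified Lean document; each statement's English description precedes it below -/
import Mathlib

section
/- The point (−722, 34656) lies on the elliptic curve y² = x³ + 1292x² − 1251948x over ℚ, and this point has infinite order. -/
/-- The `π/3`-congruent number curve for `n = 646`: `y² = x³ + 1292x² − 1251948x`. -/
def W : WeierstrassCurve ℚ := ⟨0, 1292, 0, -1251948, 0⟩

/-!
Two-isogeny descent. On `y² = x³ + a x² + b x` the map sending `(x, y)` to the square class of
`x` (and `(0, 0)` to that of `b`) is a homomorphism to `K× / K×²`: the three `x`-coordinates of
the points on a line multiply to a square. Compose it with `q ↦ (sign q, v₂(q), v₃(q)) mod 2`.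
If `P = (−722, 34656)` had finite order, either its image `(1, 1, 0)` would vanish (odd order),
or a multiple of `P` would be a nonzero `2`-torsion point whose image is `0` or `(1, 1, 0)`.
The `2`-torsion points have `x = 0, 646, −1938`, with images `(1, 0, 1)`, `(0, 1, 0)`, `(1, 1, 1)`.
-/

theorem AddMonoidHom.eq_zero_or_exists_two_torsion_of_isOfFinAddOrder {A H : Type*}
    [AddMonoid A] [AddMonoid H] (φ : A →+ H) (hH : ∀ h : H, h + h = 0) {P : A}
    (hP : IsOfFinAddOrder P) :
    φ P = 0 ∨ ∃ Q ≠ 0, Q + Q = 0 ∧ (φ Q = 0 ∨ φ Q = φ P) := by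
  have nsmul_eq_zero_or_self (n : ℕ) : n • φ P = 0 ∨ n • φ P = φ P := by
    induction n with
    | zero => simp
    | succ n ih => rcases ih with ih | ih <;> simp [succ_nsmul, ih, hH]
  rcases Nat.even_or_odd (addOrderOf P) with ⟨n, hn⟩ | ⟨n, hn⟩
  · have hn0 : 0 < n := by have := hP.addOrderOf_pos; omega
    refine .inr ⟨n • P, fun h => ?_, ?_, by rw [map_nsmul]; exact nsmul_eq_zero_or_self n⟩
    · have := addOrderOf_le_of_nsmul_eq_zero hn0 h
      omega
    · rw [← add_nsmul, ← hn, addOrderOf_nsmul_eq_zero]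
  · left
    calc φ P = (2 * n + 1) • φ P := by rw [succ_nsmul, mul_nsmul', two_nsmul, hH, zero_add]
      _ = 0 := by rw [← hn, ← map_nsmul, addOrderOf_nsmul_eq_zero, map_zero]

open WeierstrassCurve.Affine

namespace WeierstrassCurve

variable {K : Type*} [Field K]

def twoTorsionForm (a b : K) : WeierstrassCurve K := ⟨0, a, 0, b, 0⟩

namespace twoTorsionForm

variable {a b : K}

@[simp] lemma a₁ : (twoTorsionForm a b).a₁ = 0 := rfl
@[simp] lemma a₃ : (twoTorsionForm a b).a₃ = 0 := rfl
@[simp] lemma a₄ : (twoTorsionForm a b).a₄ = b := rfl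
@[simp] lemma a₆ : (twoTorsionForm a b).a₆ = 0 := rfl

lemma equation_iff {x y : K} :
    (twoTorsionForm a b).toAffine.Equation x y ↔ y ^ 2 = x ^ 3 + a * x ^ 2 + b * x := by
  simp [Affine.equation_iff, twoTorsionForm]

@[simp]
lemma negY (x y : K) : (twoTorsionForm a b).toAffine.negY x y = -y := by
  simp [Affine.negY]

lemma exists_eq_some_zero_of_add_self_eq_zero [NeZero (2 : K)] [DecidableEq K]
    {Q : (twoTorsionForm a b).toAffine.Point} (hQ : Q ≠ 0) (hQQ : Q + Q = 0) :
    ∃ x, ∃ h : (twoTorsionForm a b).toAffine.Nonsingular x 0, Q = .some _ _ h := by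
  rcases Q with _ | @⟨x, y, h⟩
  · exact absurd rfl hQ
  obtain rfl : y = 0 := by
    by_contra hy
    have hy' : y ≠ (twoTorsionForm a b).toAffine.negY x y := by
      rw [negY]
      intro h
      exact hy ((mul_eq_zero.1 (by linear_combination h : (2 : K) * y = 0)).resolve_left
        two_ne_zero)
    exact Point.some_ne_zero _ (Point.add_self_of_Y_ne hy' ▸ hQQ)
  exact ⟨x, h, rfl⟩

variable [DecidableEq K]

-- `x₁, x₂, x₃` are the roots of `(L x + ν)² = x³ + a x² + b x`, where `ν = y₁ - L x₁`.
lemma addX_vieta {x₁ x₂ y₁ y₂ : K} (h₁ : (twoTorsionForm a b).toAffine.Equation x₁ y₁)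
    (h₂ : (twoTorsionForm a b).toAffine.Equation x₂ y₂) (hxy : ¬(x₁ = x₂ ∧ y₁ = -y₂)) :
    let L := (twoTorsionForm a b).toAffine.slope x₁ x₂ y₁ y₂
    let x₃ := (twoTorsionForm a b).toAffine.addX x₁ x₂ L
    x₁ * x₂ * x₃ = (y₁ - L * x₁) ^ 2 ∧
      x₁ * x₂ + x₁ * x₃ + x₂ * x₃ = b - 2 * L * (y₁ - L * x₁) := by
  have h := addPolynomial_slope h₁ h₂ (by simpa using hxy)
  rw [addPolynomial_eq, neg_inj, Cubic.prod_X_sub_C_eq, Cubic.toPoly_injective] at h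
  obtain ⟨-, -, hc, hd⟩ := Cubic.ext_iff.1 h
  simp only [a₁, a₃, a₄, a₆] at hc hd
  exact ⟨by linear_combination hd, by linear_combination -hc⟩

variable {G : Type*} [AddCommGroup G] (χ : K → G)

-- The value at `0` is forced: `(0, 0) + (x, y)` has `x`-coordinate `b / x`.
def descentX (b x : K) : G := if x = 0 then χ b else χ x

def descent : (twoTorsionForm a b).toAffine.Point → G
  | .zero => 0
  | @Point.some _ _ _ x _ _ => descentX χ b x

variable {χ}

lemma descentX_add_add_eq_zero_of_eq_zero (hG : ∀ g : G, g + g = 0)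
    (hχ : ∀ {u v : K}, u ≠ 0 → v ≠ 0 → χ (u * v) = χ u + χ v) (hb : b ≠ 0) {x₁ x₂ x₃ : K}
    (h₁ : x₁ = 0) (h₂₃ : x₂ * x₃ = b) :
    descentX χ b x₁ + descentX χ b x₂ + descentX χ b x₃ = 0 := by
  have h₂ : x₂ ≠ 0 := by rintro rfl; exact hb (by simpa using h₂₃.symm)
  have h₃ : x₃ ≠ 0 := by rintro rfl; exact hb (by simpa using h₂₃.symm)
  simp only [descentX, h₁, h₂, h₃, if_true, if_false]
  rw [add_assoc, ← hχ h₂ h₃, h₂₃, hG]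

lemma descentX_add_add_eq_zero (hG : ∀ g : G, g + g = 0)
    (hχ : ∀ {u v : K}, u ≠ 0 → v ≠ 0 → χ (u * v) = χ u + χ v) (hb : b ≠ 0) {x₁ x₂ x₃ L ν : K}
    (hprod : x₁ * x₂ * x₃ = ν ^ 2) (hsum : x₁ * x₂ + x₁ * x₃ + x₂ * x₃ = b - 2 * L * ν) :
    descentX χ b x₁ + descentX χ b x₂ + descentX χ b x₃ = 0 := by
  by_cases h0 : x₁ * x₂ * x₃ = 0
  · obtain rfl : ν = 0 := pow_eq_zero_iff two_ne_zero |>.1 (hprod ▸ h0)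
    rcases mul_eq_zero.1 h0 with h₁₂ | h₃
    rcases mul_eq_zero.1 h₁₂ with h₁ | h₂
    · exact descentX_add_add_eq_zero_of_eq_zero hG hχ hb h₁
        (by linear_combination hsum - (x₂ + x₃) * h₁)
    · rw [← descentX_add_add_eq_zero_of_eq_zero hG hχ hb h₂
        (by linear_combination hsum - (x₁ + x₃) * h₂ : x₁ * x₃ = b)]
      abel
    · rw [← descentX_add_add_eq_zero_of_eq_zero hG hχ hb h₃
        (by linear_combination hsum - (x₁ + x₂) * h₃ : x₁ * x₂ = b)]
      abel
  · have hν : ν ≠ 0 := by rintro rfl; exact h0 (by simpa using hprod)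
    obtain ⟨⟨h₁, h₂⟩, h₃⟩ := by simpa only [mul_ne_zero_iff] using h0
    simp only [descentX, h₁, h₂, h₃, if_false]
    rw [← hχ h₁ h₂, ← hχ (mul_ne_zero h₁ h₂) h₃, hprod, sq, hχ hν hν, hG]

lemma descent_add (hG : ∀ g : G, g + g = 0)
    (hχ : ∀ {u v : K}, u ≠ 0 → v ≠ 0 → χ (u * v) = χ u + χ v) (hb : b ≠ 0)
    (P Q : (twoTorsionForm a b).toAffine.Point) :
    descent χ (P + Q) = descent χ P + descent χ Q := by
  rcases P with _ | @⟨x₁, y₁, h₁⟩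
  · simp [← Point.zero_def, descent]
  rcases Q with _ | @⟨x₂, y₂, h₂⟩
  · simp [← Point.zero_def, descent]
  by_cases hxy : x₁ = x₂ ∧ y₁ = -y₂
  · rw [Point.add_of_Y_eq hxy.1 (hxy.2.trans (negY x₂ y₂).symm)]
    show 0 = descentX χ b x₁ + descentX χ b x₂
    rw [hxy.1, hG]
  · rw [Point.add_some (by rwa [negY])]
    obtain ⟨hprod, hsum⟩ := addX_vieta h₁.1 h₂.1 hxy
    have := descentX_add_add_eq_zero hG hχ hb hprod hsum
    exact (eq_neg_of_add_eq_zero_right this).trans (neg_eq_of_add_eq_zero_right (hG _))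

def descentHom (hG : ∀ g : G, g + g = 0)
    (hχ : ∀ {u v : K}, u ≠ 0 → v ≠ 0 → χ (u * v) = χ u + χ v) (hb : b ≠ 0) :
    (twoTorsionForm a b).toAffine.Point →+ G :=
  AddMonoidHom.mk' (descent χ) (descent_add hG hχ hb)

end twoTorsionForm

end WeierstrassCurve

noncomputable def squareClass (q : ℚ) : ZMod 2 × ZMod 2 × ZMod 2 :=
  (if q < 0 then 1 else 0, (padicValRat 2 q : ZMod 2), (padicValRat 3 q : ZMod 2))

lemma squareClass_mul {a b : ℚ} (ha : a ≠ 0) (hb : b ≠ 0) :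
    squareClass (a * b) = squareClass a + squareClass b := by
  have hsign : (if a * b < 0 then 1 else 0 : ZMod 2) =
      (if a < 0 then 1 else 0) + (if b < 0 then 1 else 0) := by
    rcases ha.lt_or_gt with ha | ha <;> rcases hb.lt_or_gt with hb | hb <;>
      simp [ha, hb, ha.not_gt, hb.not_gt, mul_neg_iff]
    rfl
  simp only [squareClass, Prod.mk_add_mk, hsign, padicValRat.mul ha hb]
  push_cast
  rfl

lemma padicValRat_ofNat_eq_count {p : ℕ} (hp : p.Prime) (n : ℕ) [n.AtLeastTwo] :
    padicValRat p (OfNat.ofNat n : ℚ) = n.primeFactorsList.count p := by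
  rw [← Nat.cast_ofNat, padicValRat.of_nat, Nat.primeFactorsList_count_eq,
    Nat.factorization_def _ hp]
  rfl

lemma squareClass_ofNat (n : ℕ) [n.AtLeastTwo] :
    squareClass ofNat(n) =
      (0, (n.primeFactorsList.count 2 : ZMod 2), (n.primeFactorsList.count 3 : ZMod 2)) := by
  simp [squareClass, padicValRat_ofNat_eq_count Nat.prime_two,
    padicValRat_ofNat_eq_count Nat.prime_three]

lemma squareClass_neg_ofNat (n : ℕ) [n.AtLeastTwo] :
    squareClass (-ofNat(n)) =
      (1, (n.primeFactorsList.count 2 : ZMod 2), (n.primeFactorsList.count 3 : ZMod 2)) := by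
  simp [squareClass, padicValRat.neg, padicValRat_ofNat_eq_count Nat.prime_two,
    padicValRat_ofNat_eq_count Nat.prime_three]

open WeierstrassCurve twoTorsionForm in
/-- The point `(−722, 34656)` lies on `y² = x³ + 1292x² − 1251948x` and has
infinite order in the Mordell–Weil group. -/
theorem point_on_curve_infinite_order :
    ∃ h : W.toAffine.Nonsingular (-722) 34656,
      ∀ k : ℤ, k ≠ 0 → k • (WeierstrassCurve.Affine.Point.some _ _ h) ≠ 0 := by
  rw [show W = twoTorsionForm 1292 (-1251948) from rfl]
  have hP : (twoTorsionForm (1292 : ℚ) (-1251948)).toAffine.Nonsingular (-722) 34656 := by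
    rw [Affine.nonsingular_iff, Affine.equation_iff]
    norm_num [twoTorsionForm]
  refine ⟨hP, fun k hk hkP => ?_⟩
  let φ : (twoTorsionForm (1292 : ℚ) (-1251948)).toAffine.Point →+ ZMod 2 × ZMod 2 × ZMod 2 :=
    descentHom CharTwo.add_self_eq_zero squareClass_mul (by norm_num)
  have hφ (x y : ℚ) (h) : φ (.some x y h) = descentX squareClass (-1251948) x := rfl
  rcases φ.eq_zero_or_exists_two_torsion_of_isOfFinAddOrder CharTwo.add_self_eq_zero
    (isOfFinAddOrder_iff_zsmul_eq_zero.2 ⟨k, hk, hkP⟩) with h | ⟨Q, hQ, hQQ, hφQ⟩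
  · revert h
    simp [hφ, descentX, squareClass_neg_ofNat, Nat.primeFactorsList_ofNat]
  · obtain ⟨x, hx, rfl⟩ := exists_eq_some_zero_of_add_self_eq_zero hQ hQQ
    have hroots : x = 0 ∨ x = 646 ∨ x = -1938 := by
      have h : x * ((x - 646) * (x + 1938)) = 0 := by
        linear_combination -(twoTorsionForm.equation_iff.1 hx.1)
      simpa only [mul_eq_zero, sub_eq_zero, add_eq_zero_iff_eq_neg] using h
    rcases hroots with rfl | rfl | rfl <;> revert hφQ <;>
      simp [hφ, descentX, squareClass_ofNat, squareClass_neg_ofNat, Nat.primeFactorsList_ofNat]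
end

section
/- The Mordell–Weil rank of the elliptic curve y² = x³ + 1292x² − 1251948x over ℚ is at least 3; in particular the points (−722, 34656), (6137, 521645), (−1216, 40432) generate a subgroup of rank 3. -/
open Polynomial WeierstrassCurve.Affine

lemma linearIndependent_int_of_two_descent {ι A : Type*} [Fintype ι] [AddCommGroup A]
    {P : ι → A}
    (hdesc : ∀ (a : ι → ℤ) (t : A), 2 • t = 0 → ∑ i, a i • P i = t → t = 0 ∧ ∀ i, 2 ∣ a i) :
    LinearIndependent ℤ P := by
  have hpow : ∀ n : ℕ, ∀ a : ι → ℤ, ∑ i, a i • P i = 0 → ∀ i, 2 ^ n ∣ a i := by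
    intro n
    induction n with
    | zero => simp
    | succ n ih =>
      intro a ha i
      choose b hb using (hdesc a 0 (smul_zero 2) ha).2
      have htwo : 2 • ∑ i, b i • P i = 0 := by
        rw [Finset.smul_sum, ← ha]
        refine Finset.sum_congr rfl fun i _ ↦ ?_
        rw [hb i, mul_smul, two_zsmul, two_nsmul]
      rw [hb i, pow_succ']
      exact mul_dvd_mul_left 2 (ih b (hdesc b _ htwo rfl).1 i)
  refine Fintype.linearIndependent_iff.2 fun a ha i ↦ ?_
  by_contra hai
  obtain ⟨n, hn⟩ := (Int.finiteMultiplicity_iff (a := 2)).2 ⟨by decide, hai⟩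
  exact hn (hpow (n + 1) a ha i)

noncomputable def valParity (p : ℕ) (q : ℚ) : ZMod 2 := (padicValRat p q : ZMod 2)

lemma valParity_neg (p : ℕ) (q : ℚ) : valParity p (-q) = valParity p q := by
  simp [valParity, padicValRat.neg]

section valParity

variable {p : ℕ} [Fact p.Prime]

lemma valParity_mul {q r : ℚ} (hq : q ≠ 0) (hr : r ≠ 0) :
    valParity p (q * r) = valParity p q + valParity p r := by
  simp [valParity, padicValRat.mul hq hr]

lemma valParity_sq (q : ℚ) : valParity p (q ^ 2) = 0 := by
  simp [valParity, padicValRat.pow, show (2 : ZMod 2) = 0 from rfl]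

lemma valParity_natCast (n : ℕ) :
    valParity p n = (n.primeFactorsList.count p % 2 : ℕ) := by
  rw [valParity, padicValRat.of_nat, Nat.primeFactorsList_count_eq,
    Nat.factorization_def _ Fact.out, ZMod.natCast_mod]
  simp

lemma valParity_ofNat (n : ℕ) [n.AtLeastTwo] :
    valParity p (ofNat(n) : ℚ) = ((ofNat(n) : ℕ).primeFactorsList.count p % 2 : ℕ) := by
  rw [← valParity_natCast, Nat.cast_ofNat]

end valParity

/-- At `x = e` the factor `x - e` vanishes and the value is taken at `d` instead; the descent map
uses `d = f'(e) = (e - e₂)(e - e₃)`, which is what makes it additive. -/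
noncomputable def descentValue (p : ℕ) (e d x : ℚ) : ZMod 2 :=
  if x = e then valParity p d else valParity p (x - e)

section descentValue

variable {p : ℕ} [Fact p.Prime] {e d x₁ x₂ x₃ ℓ L : ℚ}

lemma descentValue_add_add_of_eq_root (hd : d ≠ 0) (hx₁ : x₁ = e)
    (hsq : (x₁ - e) * (x₂ - e) * (x₃ - e) = ℓ ^ 2)
    (hd_eq : d = (e - x₁) * (e - x₂) + (e - x₁) * (e - x₃) + (e - x₂) * (e - x₃) + 2 * L * ℓ) :
    descentValue p e d x₁ + descentValue p e d x₂ + descentValue p e d x₃ = 0 := by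
  subst hx₁
  have hℓ : ℓ = 0 := by simpa using hsq.symm
  have hd' : d = (x₂ - x₁) * (x₃ - x₁) := by rw [hd_eq, hℓ]; ring
  have hx₂ : x₂ - x₁ ≠ 0 := fun h ↦ hd (by rw [hd', h, zero_mul])
  have hx₃ : x₃ - x₁ ≠ 0 := fun h ↦ hd (by rw [hd', h, mul_zero])
  simp only [descentValue, if_true, if_neg (sub_ne_zero.mp hx₂), if_neg (sub_ne_zero.mp hx₃),
    hd', valParity_mul hx₂ hx₃]
  linear_combination
    (valParity p (x₂ - x₁) + valParity p (x₃ - x₁)) * CharTwo.two_eq_zero (R := ZMod 2)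

lemma descentValue_add_add (hd : d ≠ 0) (hsq : (x₁ - e) * (x₂ - e) * (x₃ - e) = ℓ ^ 2)
    (hd_eq : d = (e - x₁) * (e - x₂) + (e - x₁) * (e - x₃) + (e - x₂) * (e - x₃) + 2 * L * ℓ) :
    descentValue p e d x₁ + descentValue p e d x₂ + descentValue p e d x₃ = 0 := by
  by_cases hx₁ : x₁ = e
  · exact descentValue_add_add_of_eq_root hd hx₁ hsq hd_eq
  by_cases hx₂ : x₂ = e
  · rw [← descentValue_add_add_of_eq_root (p := p) (x₂ := x₁) (x₃ := x₃) (ℓ := ℓ) (L := L) hd hx₂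
      (by rw [← hsq]; ring) (by rw [hd_eq]; ring)]
    ring
  by_cases hx₃ : x₃ = e
  · rw [← descentValue_add_add_of_eq_root (p := p) (x₂ := x₁) (x₃ := x₂) (ℓ := ℓ) (L := L) hd hx₃
      (by rw [← hsq]; ring) (by rw [hd_eq]; ring)]
    ring
  have h₁ := sub_ne_zero.mpr hx₁
  have h₂ := sub_ne_zero.mpr hx₂
  have h₃ := sub_ne_zero.mpr hx₃
  simp only [descentValue, if_neg hx₁, if_neg hx₂, if_neg hx₃, ← valParity_mul h₁ h₂,
    ← valParity_mul (mul_ne_zero h₁ h₂) h₃, hsq, valParity_sq]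

end descentValue

namespace WeierstrassCurve

section Field

variable {F : Type*} [Field F] {E : WeierstrassCurve F} {x₁ x₂ x₃ y₁ L e : F}

lemma nonsingular_Y_zero_iff (ha₁ : E.a₁ = 0) (ha₃ : E.a₃ = 0) (x : F) :
    E.toAffine.Nonsingular x 0 ↔
      x ^ 3 + E.a₂ * x ^ 2 + E.a₄ * x + E.a₆ = 0 ∧ 3 * x ^ 2 + 2 * E.a₂ * x + E.a₄ ≠ 0 := by
  simp [nonsingular_iff, equation_iff, ha₁, ha₃, eq_comm]

lemma eq_zero_or_exists_eq_some_Y_zero [DecidableEq F] (ha₁ : E.a₁ = 0) (ha₃ : E.a₃ = 0)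
    (h2 : (2 : F) ≠ 0) {t : E.toAffine.Point} (ht : 2 • t = 0) :
    t = 0 ∨ ∃ x, ∃ h : E.toAffine.Nonsingular x 0, t = .some x 0 h := by
  rcases t with _ | ⟨x, y, h⟩
  · exact .inl rfl
  have hy : y = E.toAffine.negY x y := by
    by_contra hy
    rw [two_nsmul, Point.add_self_of_Y_ne hy] at ht
    exact Point.some_ne_zero _ ht
  have hy0 : y = 0 := by
    rw [negY, ha₁, ha₃] at hy
    exact (mul_eq_zero.mp (by linear_combination hy : 2 * y = 0)).resolve_left h2
  subst hy0
  exact .inr ⟨x, h, rfl⟩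

lemma eval_addPolynomial (ha₁ : E.a₁ = 0) (ha₃ : E.a₃ = 0) (x y L e : F) :
    (E.toAffine.addPolynomial x y L).eval e =
      (L * (e - x) + y) ^ 2 - (e ^ 3 + E.a₂ * e ^ 2 + E.a₄ * e + E.a₆) := by
  simp [addPolynomial, linePolynomial, Affine.polynomial, ha₁, ha₃]

lemma eval_derivative_addPolynomial (ha₁ : E.a₁ = 0) (ha₃ : E.a₃ = 0) (x y L e : F) :
    (derivative (E.toAffine.addPolynomial x y L)).eval e =
      2 * L * (L * (e - x) + y) - (3 * e ^ 2 + 2 * E.a₂ * e + E.a₄) := by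
  simp only [addPolynomial, linePolynomial, Affine.polynomial, ha₁, ha₃, map_zero, zero_mul,
    add_zero, map_add, map_pow, map_mul, eval_sub, eval_pow, eval_X, eval_add, eval_C, eval_mul,
    derivative_sub, derivative_pow, Nat.cast_ofNat, Nat.add_one_sub_one, pow_one,
    derivative_mul, derivative_C, derivative_X, sub_zero, mul_one, zero_add]
  ring

lemma prod_sub_eq_sq_of_addPolynomial_eq (ha₁ : E.a₁ = 0) (ha₃ : E.a₃ = 0)
    (h : E.toAffine.addPolynomial x₁ y₁ L = -((X - C x₁) * (X - C x₂) * (X - C x₃)))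
    (he : e ^ 3 + E.a₂ * e ^ 2 + E.a₄ * e + E.a₆ = 0) :
    (x₁ - e) * (x₂ - e) * (x₃ - e) = (L * (e - x₁) + y₁) ^ 2 := by
  have h_eval := congrArg (eval e) h
  rw [eval_addPolynomial ha₁ ha₃, he] at h_eval
  simp only [eval_neg, eval_mul, eval_sub, eval_X, eval_C, sub_zero] at h_eval
  linear_combination -h_eval

lemma derivative_eval_eq_of_addPolynomial_eq (ha₁ : E.a₁ = 0) (ha₃ : E.a₃ = 0)
    (h : E.toAffine.addPolynomial x₁ y₁ L = -((X - C x₁) * (X - C x₂) * (X - C x₃))) :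
    3 * e ^ 2 + 2 * E.a₂ * e + E.a₄ = (e - x₁) * (e - x₂) + (e - x₁) * (e - x₃) +
      (e - x₂) * (e - x₃) + 2 * L * (L * (e - x₁) + y₁) := by
  have h_eval := congrArg (fun f ↦ (derivative f).eval e) h
  simp only [eval_derivative_addPolynomial ha₁ ha₃] at h_eval
  simp only [derivative_neg, derivative_mul, derivative_sub, derivative_X, derivative_C, sub_zero,
    one_mul, mul_one, eval_add, eval_neg, eval_mul, eval_sub, eval_X, eval_C] at h_eval
  linear_combination -h_eval

end Field

variable (E : WeierstrassCurve ℚ)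

noncomputable def descentFun (p : ℕ) (e : ℚ) : E.toAffine.Point → ZMod 2
  | .zero => 0
  | .some x _ _ => descentValue p e (3 * e ^ 2 + 2 * E.a₂ * e + E.a₄) x

variable {E}

lemma descentFun_add (ha₁ : E.a₁ = 0) (ha₃ : E.a₃ = 0) (p : ℕ) [Fact p.Prime] {e : ℚ}
    (hT : E.toAffine.Nonsingular e 0) (P Q : E.toAffine.Point) :
    E.descentFun p e (P + Q) = E.descentFun p e P + E.descentFun p e Q := by
  obtain ⟨he, hd⟩ := (nonsingular_Y_zero_iff ha₁ ha₃ e).mp hT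
  rcases P with _ | ⟨x₁, y₁, h₁⟩
  · simp [← Point.zero_def, descentFun]
  rcases Q with _ | ⟨x₂, y₂, h₂⟩
  · simp [← Point.zero_def, descentFun]
  by_cases hxy : x₁ = x₂ ∧ y₁ = E.toAffine.negY x₂ y₂
  · rw [Point.add_of_Y_eq hxy.1 hxy.2]
    simp [descentFun, hxy.1, CharTwo.add_self_eq_zero]
  have hfac := addPolynomial_slope h₁.1 h₂.1 hxy
  have hsum := descentValue_add_add (p := p) hd
    (prod_sub_eq_sq_of_addPolynomial_eq ha₁ ha₃ hfac he)
    (derivative_eval_eq_of_addPolynomial_eq ha₁ ha₃ hfac)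
  rw [Point.add_some hxy]
  exact (eq_neg_of_add_eq_zero_right hsum).trans (CharTwo.neg_eq _)

variable (ha₁ : E.a₁ = 0) (ha₃ : E.a₃ = 0) (p : ℕ) [Fact p.Prime] {e : ℚ}
  (hT : E.toAffine.Nonsingular e 0)

noncomputable def descentHom : E.toAffine.Point →+ ZMod 2 :=
  AddMonoidHom.mk' (E.descentFun p e) (descentFun_add ha₁ ha₃ p hT)

@[simp]
lemma descentHom_some {x y : ℚ} (h : E.toAffine.Nonsingular x y) :
    E.descentHom ha₁ ha₃ p hT (.some x y h) =
      descentValue p e (3 * e ^ 2 + 2 * E.a₂ * e + E.a₄) x :=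
  rfl

end WeierstrassCurve

open WeierstrassCurve

namespace Curve646

lemma a₁_eq : W.a₁ = 0 := rfl
lemma a₂_eq : W.a₂ = 1292 := rfl
lemma a₃_eq : W.a₃ = 0 := rfl
lemma a₄_eq : W.a₄ = -1251948 := rfl
lemma a₆_eq : W.a₆ = 0 := rfl

lemma nonsingular_P₁ : W.toAffine.Nonsingular (-722) 34656 := by
  rw [nonsingular_iff, equation_iff]; norm_num [W]

lemma nonsingular_P₂ : W.toAffine.Nonsingular 6137 521645 := by
  rw [nonsingular_iff, equation_iff]; norm_num [W]

lemma nonsingular_P₃ : W.toAffine.Nonsingular (-1216) 40432 := by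
  rw [nonsingular_iff, equation_iff]; norm_num [W]

lemma nonsingular_Y_zero_iff_root {x : ℚ} :
    W.toAffine.Nonsingular x 0 ↔ x = 0 ∨ x = 646 ∨ x = -1938 := by
  rw [nonsingular_Y_zero_iff a₁_eq a₃_eq, a₂_eq, a₄_eq, a₆_eq]
  constructor
  · rintro ⟨h, -⟩
    have hfac : x * ((x - 646) * (x + 1938)) = 0 := by linear_combination h
    rcases mul_eq_zero.mp hfac with h | h
    · exact .inl h
    rcases mul_eq_zero.mp h with h | h
    · exact .inr (.inl (by linear_combination h))
    · exact .inr (.inr (by linear_combination h))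
  · rintro (rfl | rfl | rfl) <;> norm_num

noncomputable def generators : Fin 3 → W.toAffine.Point :=
  ![.some _ _ nonsingular_P₁, .some _ _ nonsingular_P₂, .some _ _ nonsingular_P₃]

instance : Fact (Nat.Prime 17) := ⟨by norm_num⟩
instance : Fact (Nat.Prime 19) := ⟨by norm_num⟩

noncomputable def descentVector : W.toAffine.Point →+ (Fin 5 → ZMod 2) :=
  AddMonoidHom.pi ![W.descentHom a₁_eq a₃_eq 2 (nonsingular_Y_zero_iff_root.2 (.inl rfl)),
    W.descentHom a₁_eq a₃_eq 3 (nonsingular_Y_zero_iff_root.2 (.inl rfl)),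
    W.descentHom a₁_eq a₃_eq 17 (nonsingular_Y_zero_iff_root.2 (.inl rfl)),
    W.descentHom a₁_eq a₃_eq 19 (nonsingular_Y_zero_iff_root.2 (.inl rfl)),
    W.descentHom a₁_eq a₃_eq 19 (nonsingular_Y_zero_iff_root.2 (.inr (.inl rfl)))]

def generatorImages : Fin 3 → Fin 5 → ZMod 2 :=
  ![![1, 0, 0, 0, 1], ![0, 0, 1, 0, 1], ![0, 0, 0, 1, 1]]

def twoTorsionImages : Finset (Fin 5 → ZMod 2) :=
  {![0, 1, 0, 0, 1], ![1, 0, 1, 1, 0], ![1, 1, 1, 1, 1]}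

lemma descentVector_some {x y : ℚ} (h : W.toAffine.Nonsingular x y) :
    descentVector (.some x y h) = ![descentValue 2 0 (-1251948) x, descentValue 3 0 (-1251948) x,
      descentValue 17 0 (-1251948) x, descentValue 19 0 (-1251948) x,
      descentValue 19 646 1669264 x] := by
  ext j
  fin_cases j <;> norm_num [descentVector, a₂_eq, a₄_eq]

lemma descentVector_comp_generators : descentVector ∘ generators = generatorImages := by
  ext i : 1
  fin_cases i <;>
    norm_num [generators, generatorImages, descentVector_some, descentValue, valParity_neg] <;>
    simp [valParity_ofNat]

lemma descentVector_some_Y_zero {x : ℚ} (h : W.toAffine.Nonsingular x 0) :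
    descentVector (.some x 0 h) ∈ twoTorsionImages := by
  rcases nonsingular_Y_zero_iff_root.1 h with rfl | rfl | rfl <;>
    norm_num [twoTorsionImages, descentVector_some, descentValue, valParity_neg] <;>
    simp [valParity_ofNat]

lemma eq_zero_of_sum_smul_generatorImages_eq_zero :
    ∀ b : Fin 3 → ZMod 2, ∑ i, b i • generatorImages i = 0 → b = 0 := by
  decide

lemma sum_smul_generatorImages_notMem_twoTorsionImages :
    ∀ b : Fin 3 → ZMod 2, ∑ i, b i • generatorImages i ∉ twoTorsionImages := by
  decide

lemma eq_zero_and_two_dvd_of_sum_zsmul_generators_eq (a : Fin 3 → ℤ) (t : W.toAffine.Point)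
    (ht : 2 • t = 0) (h : ∑ i, a i • generators i = t) : t = 0 ∧ ∀ i, 2 ∣ a i := by
  have hvec : ∑ i, (a i : ZMod 2) • (descentVector ∘ generators) i = descentVector t := by
    simp [← h, map_sum, map_zsmul, Int.cast_smul_eq_zsmul]
  rw [descentVector_comp_generators] at hvec
  rcases eq_zero_or_exists_eq_some_Y_zero a₁_eq a₃_eq two_ne_zero ht with rfl | ⟨x, hx, rfl⟩
  · refine ⟨rfl, fun i ↦ (ZMod.intCast_zmod_eq_zero_iff_dvd _ 2).1 ?_⟩
    exact congrFun (eq_zero_of_sum_smul_generatorImages_eq_zero _ (hvec.trans (map_zero _))) i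
  · exact (sum_smul_generatorImages_notMem_twoTorsionImages _
      (hvec ▸ descentVector_some_Y_zero hx)).elim

end Curve646

/-- The points `(−722, 34656)`, `(6137, 521645)`, `(−1216, 40432)` are
`ℤ`-linearly independent in `E(ℚ)`, i.e. they generate a subgroup of rank `3`;
in particular the Mordell–Weil rank of `E(ℚ)` is at least `3`. -/
theorem rank_at_least_three :
    ∃ (h1 : W.toAffine.Nonsingular (-722) 34656)
      (h2 : W.toAffine.Nonsingular 6137 521645)
      (h3 : W.toAffine.Nonsingular (-1216) 40432),
      ∀ a b c : ℤ,
        a • (WeierstrassCurve.Affine.Point.some _ _ h1) +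
        b • (WeierstrassCurve.Affine.Point.some _ _ h2) +
        c • (WeierstrassCurve.Affine.Point.some _ _ h3) = 0 →
        a = 0 ∧ b = 0 ∧ c = 0 := by
  refine ⟨Curve646.nonsingular_P₁, Curve646.nonsingular_P₂, Curve646.nonsingular_P₃,
    fun a b c h ↦ ?_⟩
  have hind := Fintype.linearIndependent_iff.1
    (linearIndependent_int_of_two_descent Curve646.eq_zero_and_two_dvd_of_sum_zsmul_generators_eq)
    ![a, b, c] (by simpa [Fin.sum_univ_three, Curve646.generators] using h)
  exact ⟨hind 0, hind 1, hind 2⟩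
end

section
/- Let p, q be positive integers with gcd(p,q) = 1, and let m = pq(p+q)(2rq + p(r−s)). Then the squarefree part n of m is a θ-congruent number, where cos θ = s/r with 0 ≤ |s| < r and gcd(r,s) = 1. -/
/-!
The triangle with sides `a = p(2rq + p(r − s))`, `b = 2rq(p + q)` and
`c = (r − s)p² + 2(r − s)pq + 2rq²` satisfies the law of cosines for `cos θ = s/r`, and
`ab = 2r·m` with `m = pq(p + q)(2rq + p(r − s))`, so `m` is `θ`-congruent. Dividing all
sides by `t` divides `ab` by `t²`, hence `m = n t²` passes the property on to `n`.
-/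

/-- `n` is a `θ`-congruent number, where `cos θ = s / r`: there is a triangle with
positive rational sides `a`, `b`, `c`, with angle `θ` between `a` and `b`
(`c² = a² + b² − 2ab·(s/r)`) and area `n·√(r² − s²)` (equivalently `ab = 2nr`). -/
def IsThetaCongruent (r s : ℤ) (n : ℤ) : Prop :=
  ∃ a b c : ℚ, 0 < a ∧ 0 < b ∧ 0 < c ∧
    c ^ 2 = a ^ 2 + b ^ 2 - 2 * a * b * ((s : ℚ) / (r : ℚ)) ∧
    a * b = 2 * (n : ℚ) * (r : ℚ)

theorem IsThetaCongruent.of_mul_sq {r s n t : ℤ} (ht : t ≠ 0)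
    (h : IsThetaCongruent r s (n * t ^ 2)) : IsThetaCongruent r s n := by
  obtain ⟨a, b, c, ha, hb, hc, hcos, harea⟩ := h
  have htQ : 0 < |(t : ℚ)| := abs_pos.mpr (Int.cast_ne_zero.mpr ht)
  refine ⟨a / |(t : ℚ)|, b / |(t : ℚ)|, c / |(t : ℚ)|, div_pos ha htQ, div_pos hb htQ,
    div_pos hc htQ, ?_, ?_⟩
  · field_simp
    linear_combination hcos
  · field_simp
    rw [sq_abs]
    push_cast at harea
    linear_combination harea

theorem isThetaCongruent_kan {r s p q : ℤ} (hsr : |s| < r) (hp : 0 < p) (hq : 0 < q) :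
    IsThetaCongruent r s (p * q * (p + q) * (2 * r * q + p * (r - s))) := by
  have hr : 0 < r := (abs_nonneg s).trans_lt hsr
  have hrs : 0 < r - s := sub_pos.mpr ((le_abs_self s).trans_lt hsr)
  have hrQ : (r : ℚ) ≠ 0 := by exact_mod_cast hr.ne'
  refine ⟨(p * (2 * r * q + p * (r - s)) : ℤ), (2 * r * q * (p + q) : ℤ),
    ((r - s) * p ^ 2 + 2 * (r - s) * p * q + 2 * r * q ^ 2 : ℤ), ?_, ?_, ?_, ?_, ?_⟩
  · exact_mod_cast (by positivity : (0 : ℤ) < p * (2 * r * q + p * (r - s)))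
  · exact_mod_cast (by positivity : (0 : ℤ) < 2 * r * q * (p + q))
  · exact_mod_cast
      (by positivity : (0 : ℤ) < (r - s) * p ^ 2 + 2 * (r - s) * p * q + 2 * r * q ^ 2)
  · push_cast
    field_simp
    ring
  · push_cast
    ring

theorem squarefree_part_is_theta_congruent_general (r s : ℤ) (hsr : |s| < r)
    (p q : ℤ) (hp : 0 < p) (hq : 0 < q)
    (n t : ℤ) (ht : 0 < t)
    (hm : p * q * (p + q) * (2 * r * q + p * (r - s)) = n * t ^ 2) :
    IsThetaCongruent r s n :=
  IsThetaCongruent.of_mul_sq ht.ne' (hm ▸ isThetaCongruent_kan hsr hp hq)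

/-- (Kan) If `m = pq(p+q)(2rq + p(r−s))` with `p, q` coprime positive integers,
then the squarefree part `n` of `m` (i.e. the squarefree `n` with `m = n·t²`)
is a `θ`-congruent number. -/
theorem squarefree_part_is_theta_congruent (r s : ℤ) (hsr : |s| < r)
    (hgcd : Int.gcd r s = 1) (p q : ℤ) (hp : 0 < p) (hq : 0 < q)
    (hpq : Int.gcd p q = 1) (n t : ℤ) (hn : 0 < n) (ht : 0 < t)
    (hsf : Squarefree n)
    (hm : p * q * (p + q) * (2 * r * q + p * (r - s)) = n * t ^ 2) :
    IsThetaCongruent r s n :=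
  squarefree_part_is_theta_congruent_general r s hsr p q hp hq n t ht hm
end
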